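/- arXiv:1804.06011 — 4 statements merged into one kernel-verified Lean document; each statement's English description precedes it below -/
import Mathlib

section
/- Let c ∈ ℝ² and ψ ∈ ℝ, and let v_k = c + (cos(ψ + kπ/3), sin(ψ + kπ/3)) for k = 0,…,5 be the six vertices of a regular hexagon with unit side length. Let Q, S : [0,∞) → ℝ² be any 1-Lipschitz functions (with arbitrary starting positions). Then there exists a vertex v_k such that either v_k is never visited (i.e. there is no t with Q(t) = v_k or S(t) = v_k), or t_k + ‖Q(t_k) − v_k‖ ≥ 2 + √3/2, where t_k is the infimum (attained, by continuity) of the times t with Q(t) = v_k or S(t) = v_k. -/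
open Real Set MeasureTheory
open scoped RealInnerProductSpace

noncomputable section

abbrev Plane : Type := EuclideanSpace ℝ (Fin 2)

/-- The point of the unit circle at angle `θ`. -/
def circlePt (θ : ℝ) : Plane := (WithLp.equiv 2 (Fin 2 → ℝ)).symm ![Real.cos θ, Real.sin θ]

/-- A trajectory in the priority evacuation model: a `1`-Lipschitz function on `[0, ∞)`
starting at the origin. -/
def IsTraj (f : ℝ → Plane) : Prop :=
  LipschitzOnWith 1 f (Set.Ici 0) ∧ f 0 = 0

/-- The first-visit time of the point `p` by the queen `Q` or one of the servants `S i`. -/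
def visitTime {n : ℕ} (Q : ℝ → Plane) (S : Fin n → ℝ → Plane) (p : Plane) : ℝ :=
  sInf {t : ℝ | 0 ≤ t ∧ (Q t = p ∨ ∃ i, S i t = p)}

/-- The trajectories `Q` (queen) and `S 0, …, S (n-1)` (servants) evacuate the queen in
time `B`: every point of the unit circle is visited, and the first-visit time plus the
distance from the queen (at that moment) to the point is at most `B`. -/
def Evacuates {n : ℕ} (Q : ℝ → Plane) (S : Fin n → ℝ → Plane) (B : ℝ) : Prop :=
  ∀ p : Plane, ‖p‖ = 1 →
    (∃ t : ℝ, 0 ≤ t ∧ (Q t = p ∨ ∃ i, S i t = p)) ∧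
    visitTime Q S p + ‖Q (visitTime Q S p) - p‖ ≤ B

/-- The set of angles in `[0, 2π)` whose circle point is visited by the queen at some
time in `Tset`; its Lebesgue measure is the arc measure of the queen-explored set. -/
def queenArc (Q : ℝ → Plane) (Tset : Set ℝ) : Set ℝ :=
  {θ : ℝ | θ ∈ Set.Ico 0 (2 * π) ∧ ∃ s ∈ Tset, Q s = circlePt θ}

/-- The `k`-th vertex of the unit-side regular hexagon centered at `c` with phase `ψ`. -/
def hexVertex (c : Plane) (ψ : ℝ) (k : Fin 6) : Plane :=
  c + circlePt (ψ + (k : ℕ) * π / 3)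

/-- The first time at which `Q` or `S` reaches the point `v`. -/
def hexVisitTime (Q S : ℝ → Plane) (v : Plane) : ℝ :=
  sInf {t : ℝ | 0 ≤ t ∧ (Q t = v ∨ S t = v)}

namespace HexLB

noncomputable def dcl (m : Fin 6) : ℝ :=
  if m = 0 then 0 else if m = 3 then 2 else if m = 1 ∨ m = 5 then 1 else Real.sqrt 3

lemma s3_lb : (1.7:ℝ) ≤ Real.sqrt 3 := by
  nlinarith [Real.sq_sqrt (show (0:ℝ) ≤ 3 by norm_num), Real.sqrt_nonneg 3]
lemma s3_ub : Real.sqrt 3 ≤ 1.8 := by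
  nlinarith [Real.sq_sqrt (show (0:ℝ) ≤ 3 by norm_num), Real.sqrt_nonneg 3]

lemma dcl0 : dcl 0 = 0 := by rw [dcl, if_pos rfl]
lemma dcl1 : dcl 1 = 1 := by rw [dcl, if_neg (by decide), if_neg (by decide), if_pos (by decide)]
lemma dcl2 : dcl 2 = Real.sqrt 3 := by
  rw [dcl, if_neg (by decide), if_neg (by decide), if_neg (by decide)]
lemma dcl3 : dcl 3 = 2 := by rw [dcl, if_neg (by decide), if_pos rfl]
lemma dcl4 : dcl 4 = Real.sqrt 3 := by
  rw [dcl, if_neg (by decide), if_neg (by decide), if_neg (by decide)]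
lemma dcl5 : dcl 5 = 1 := by rw [dcl, if_neg (by decide), if_neg (by decide), if_pos (by decide)]

lemma dcl_one_le {m : Fin 6} (h : m ≠ 0) : 1 ≤ dcl m := by
  rw [dcl]; split_ifs with h1 h2 h3
  · exact absurd h1 h
  · norm_num
  · norm_num
  · linarith [s3_lb]

lemma dcl_small {m : Fin 6} (h : m ≠ 0) (h' : dcl m < Real.sqrt 3) : m = 1 ∨ m = 5 := by
  rw [dcl] at h'; split_ifs at h' with h1 h2 h3
  · exact absurd h1 h
  · exact absurd h' (by linarith [s3_ub])
  · exact h3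
  · exact absurd h' (lt_irrefl _)

lemma lipOn {A : ℝ → Plane} (hA : LipschitzOnWith 1 A (Ici 0)) {s t : ℝ}
    (hs : 0 ≤ s) (ht : 0 ≤ t) : ‖A s - A t‖ ≤ |s - t| := by
  have := hA.dist_le_mul s hs t ht
  rwa [dist_eq_norm, Real.dist_eq, NNReal.coe_one, one_mul] at this

lemma gap {v : Fin 6 → Plane} {T : Fin 6 → ℝ} {A : ℝ → Plane}
    (hA : LipschitzOnWith 1 A (Ici 0)) {i j : Fin 6}
    (hi : A (T i) = v i) (hj : A (T j) = v j) (h0i : 0 ≤ T i) (h0j : 0 ≤ T j) :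
    ‖v i - v j‖ ≤ |T i - T j| := by
  rw [← hi, ← hj]; exact lipOn hA h0i h0j

lemma F1 {v : Fin 6 → Plane} {Q : ℝ → Plane} {T : Fin 6 → ℝ}
    (hQ : LipschitzOnWith 1 Q (Ici 0)) (hT0 : ∀ k, 0 ≤ T k)
    (hE : ∀ k, T k + ‖Q (T k) - v k‖ < 2 + Real.sqrt 3 / 2)
    (k : Fin 6) (t : ℝ) (h1 : 0 ≤ t) (h2 : t ≤ T k) :
    t + ‖Q t - v k‖ < 2 + Real.sqrt 3 / 2 := by
  have ha := lipOn hQ h1 (hT0 k)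
  rw [abs_of_nonpos (by linarith)] at ha
  have hb : ‖Q t - v k‖ ≤ ‖Q t - Q (T k)‖ + ‖Q (T k) - v k‖ := by
    simpa [dist_eq_norm] using dist_triangle (Q t) (Q (T k)) (v k)
  linarith [hE k]

lemma no3 {v : Fin 6 → Plane} {T : Fin 6 → ℝ}
    (hd : ∀ i j, ‖v i - v j‖ = dcl (i - j)) {A : ℝ → Plane}
    (hA : LipschitzOnWith 1 A (Ici 0)) {i j k : Fin 6}
    (hij : i ≠ j) (hik : i ≠ k) (hjk : j ≠ k)
    (hi : A (T i) = v i) (hj : A (T j) = v j) (hk : A (T k) = v k)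
    (h0i : 0 ≤ T i) (h0j : 0 ≤ T j) (h0k : 0 ≤ T k)
    (h2i : T i < 2) (h2j : T j < 2) (h2k : T k < 2) : False := by
  have g1 : 1 ≤ |T i - T j| := by
    have h := dcl_one_le (sub_ne_zero_of_ne hij); rw [← hd i j] at h
    exact h.trans (gap hA hi hj h0i h0j)
  have g2 : 1 ≤ |T i - T k| := by
    have h := dcl_one_le (sub_ne_zero_of_ne hik); rw [← hd i k] at h
    exact h.trans (gap hA hi hk h0i h0k)
  have g3 : 1 ≤ |T j - T k| := by
    have h := dcl_one_le (sub_ne_zero_of_ne hjk); rw [← hd j k] at h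
    exact h.trans (gap hA hj hk h0j h0k)
  rcases le_abs.mp g1 with a1 | a1 <;> rcases le_abs.mp g2 with a2 | a2 <;>
    rcases le_abs.mp g3 with a3 | a3 <;> linarith

lemma key01 (v : Fin 6 → Plane) (Q S : ℝ → Plane) (T : Fin 6 → ℝ)
    (hd : ∀ i j, ‖v i - v j‖ = dcl (i - j))
    (hQ : LipschitzOnWith 1 Q (Ici 0)) (hS : LipschitzOnWith 1 S (Ici 0))
    (hT0 : ∀ k, 0 ≤ T k)
    (hvis : ∀ k, Q (T k) = v k ∨ S (T k) = v k)
    (hE : ∀ k, T k + ‖Q (T k) - v k‖ < 2 + Real.sqrt 3 / 2)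
    (h20 : 2 ≤ T 0) (h21 : 2 ≤ T 1) (h01 : T 0 ≤ T 1) : False := by
  have h17 := s3_lb; have h18 := s3_ub
  have n01 : ‖v 0 - v 1‖ = 1 := by rw [hd, show (0 - 1 : Fin 6) = 5 from rfl, dcl5]
  have n10 : ‖v 1 - v 0‖ = 1 := by rw [hd, show (1 - 0 : Fin 6) = 1 from rfl, dcl1]
  have n20 : ‖v 2 - v 0‖ = Real.sqrt 3 := by rw [hd, show (2 - 0 : Fin 6) = 2 from rfl, dcl2]
  have n30 : ‖v 3 - v 0‖ = 2 := by rw [hd, show (3 - 0 : Fin 6) = 3 from rfl, dcl3]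
  have n02 : ‖v 0 - v 2‖ = Real.sqrt 3 := by rw [hd, show (0 - 2 : Fin 6) = 4 from rfl, dcl4]
  have n03 : ‖v 0 - v 3‖ = 2 := by rw [hd, show (0 - 3 : Fin 6) = 3 from rfl, dcl3]
  have n04 : ‖v 0 - v 4‖ = Real.sqrt 3 := by rw [hd, show (0 - 4 : Fin 6) = 2 from rfl, dcl2]
  have n15 : ‖v 1 - v 5‖ = Real.sqrt 3 := by rw [hd, show (1 - 5 : Fin 6) = 2 from rfl, dcl2]
  have n25 : ‖v 2 - v 5‖ = 2 := by rw [hd, show (2 - 5 : Fin 6) = 3 from rfl, dcl3]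
  have n23 : ‖v 2 - v 3‖ = 1 := by rw [hd, show (2 - 3 : Fin 6) = 5 from rfl, dcl5]
  have n32 : ‖v 3 - v 2‖ = 1 := by rw [hd, show (3 - 2 : Fin 6) = 1 from rfl, dcl1]
  have n45 : ‖v 4 - v 5‖ = 1 := by rw [hd, show (4 - 5 : Fin 6) = 5 from rfl, dcl5]
  have n54 : ‖v 5 - v 4‖ = 1 := by rw [hd, show (5 - 4 : Fin 6) = 1 from rfl, dcl1]
  have n24 : ‖v 2 - v 4‖ = Real.sqrt 3 := by rw [hd, show (2 - 4 : Fin 6) = 4 from rfl, dcl4]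
  have n40 : ‖v 4 - v 0‖ = Real.sqrt 3 := by rw [hd, show (4 - 0 : Fin 6) = 4 from rfl, dcl4]
  have n41 : ‖v 4 - v 1‖ = 2 := by rw [hd, show (4 - 1 : Fin 6) = 3 from rfl, dcl3]
  have n34 : ‖v 3 - v 4‖ = 1 := by rw [hd, show (3 - 4 : Fin 6) = 5 from rfl, dcl5]
  have n35 : ‖v 3 - v 5‖ = Real.sqrt 3 := by rw [hd, show (3 - 5 : Fin 6) = 4 from rfl, dcl4]
  have n51 : ‖v 5 - v 1‖ = Real.sqrt 3 := by rw [hd, show (5 - 1 : Fin 6) = 4 from rfl, dcl4]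
  have hS0 : S (T 0) = v 0 := by
    rcases hvis 0 with h | h
    · exfalso
      have hf := F1 hQ hT0 hE 1 (T 0) (hT0 0) h01
      rw [h, n01] at hf; linarith
    · exact h
  have hQ1 : Q (T 1) = v 1 := by
    rcases hvis 1 with h | h
    · exact h
    · exfalso
      have g := gap hS h hS0 (hT0 1) (hT0 0)
      rw [n10, abs_of_nonneg (by linarith)] at g
      have he := hE 1
      have hn := norm_nonneg (Q (T 1) - v 1)
      linarith
  have hE1 : T 1 < 2 + Real.sqrt 3 / 2 := by
    have he := hE 1; rw [hQ1, sub_self, norm_zero] at he; linarith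
  have hE0 : T 0 < 2 + Real.sqrt 3 / 2 := by
    have he := hE 0; have hn := norm_nonneg (Q (T 0) - v 0); linarith
  have chain : 2 * T 0 + 1 - T 1 < 2 + Real.sqrt 3 / 2 := by
    have l1 : ‖Q (T 0) - Q (T 1)‖ ≤ |T 0 - T 1| := lipOn hQ (hT0 0) (hT0 1)
    rw [abs_of_nonpos (by linarith)] at l1
    have l2 : ‖v 0 - v 1‖ ≤ ‖v 0 - Q (T 0)‖ + ‖Q (T 0) - v 1‖ := by
      simpa [dist_eq_norm] using dist_triangle (v 0) (Q (T 0)) (v 1)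
    rw [n01, norm_sub_rev (v 0) (Q (T 0)), ← hQ1] at l2
    have he := hE 0
    linarith
  have hsmall : ∀ k : Fin 6, Real.sqrt 3 ≤ ‖v 0 - v k‖ → T k < 2 := by
    intro k hk
    by_contra hc; push_neg at hc
    have a := F1 hQ hT0 hE k 2 (by norm_num) hc
    have b := F1 hQ hT0 hE 0 2 (by norm_num) h20
    have tri : ‖v 0 - v k‖ ≤ ‖v 0 - Q 2‖ + ‖Q 2 - v k‖ := by
      simpa [dist_eq_norm] using dist_triangle (v 0) (Q 2) (v k)
    rw [norm_sub_rev (v 0) (Q 2)] at tri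
    linarith
  have hT2 : T 2 < 2 := hsmall 2 (le_of_eq n02.symm)
  have hT3 : T 3 < 2 := hsmall 3 (by rw [n03]; linarith)
  have hT4 : T 4 < 2 := hsmall 4 (le_of_eq n04.symm)
  have hT5 : T 5 < 2 := by
    by_contra hc; push_neg at hc
    have a := F1 hQ hT0 hE 5 2 (by norm_num) hc
    have b := F1 hQ hT0 hE 1 2 (by norm_num) h21
    have tri : ‖v 1 - v 5‖ ≤ ‖v 1 - Q 2‖ + ‖Q 2 - v 5‖ := by
      simpa [dist_eq_norm] using dist_triangle (v 1) (Q 2) (v 5)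
    rw [norm_sub_rev (v 1) (Q 2), n15] at tri
    linarith
  rcases hvis 2 with h2 | h2 <;> rcases hvis 3 with h3 | h3 <;>
    rcases hvis 4 with h4 | h4 <;> rcases hvis 5 with h5 | h5
  -- 1: Q Q Q Q
  · exact no3 hd hQ (by decide) (by decide) (by decide) h2 h3 h4
      (hT0 2) (hT0 3) (hT0 4) hT2 hT3 hT4
  -- 2: Q Q Q S
  · exact no3 hd hQ (by decide) (by decide) (by decide) h2 h3 h4
      (hT0 2) (hT0 3) (hT0 4) hT2 hT3 hT4
  -- 3: Q Q S Q
  · exact no3 hd hQ (by decide) (by decide) (by decide) h2 h3 h5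
      (hT0 2) (hT0 3) (hT0 5) hT2 hT3 hT5
  -- 4: Q Q S S : main case A, Q = {2,3}, S = {4,5}
  · rcases le_total (T 2) (T 3) with hq | hq
    · have g := gap hQ h3 h2 (hT0 3) (hT0 2)
      rw [n32, abs_of_nonneg (by linarith)] at g
      have a := F1 hQ hT0 hE 0 (T 3) (hT0 3) (by linarith)
      rw [h3, n30] at a
      linarith [hT0 2]
    · have g32 : 1 ≤ T 2 - T 3 := by
        have g := gap hQ h2 h3 (hT0 2) (hT0 3)
        rw [n23, abs_of_nonneg (by linarith)] at g; linarith
      have hA : T 2 + Real.sqrt 3 < 2 + Real.sqrt 3 / 2 := by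
        have a := F1 hQ hT0 hE 0 (T 2) (hT0 2) (by linarith)
        rwa [h2, n20] at a
      rcases le_total (T 5) (T 4) with hs | hs
      · have g54 : 1 ≤ T 4 - T 5 := by
          have g := gap hS h5 h4 (hT0 5) (hT0 4)
          rw [n54, abs_of_nonpos (by linarith)] at g; linarith
        have g40 : Real.sqrt 3 ≤ T 0 - T 4 := by
          have g := gap hS h4 hS0 (hT0 4) (hT0 0)
          rw [n40, abs_of_nonpos (by linarith)] at g; linarith
        linarith [hT0 5]
      · have g45 : 1 ≤ T 5 - T 4 := by
          have g := gap hS h4 h5 (hT0 4) (hT0 5)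
          rw [n45, abs_of_nonpos (by linarith)] at g; linarith
        have hE5 := hE 5
        have l5 : ‖Q (T 5) - Q (T 2)‖ ≤ |T 5 - T 2| := lipOn hQ (hT0 5) (hT0 2)
        have tri : ‖v 2 - v 5‖ ≤ ‖v 2 - Q (T 5)‖ + ‖Q (T 5) - v 5‖ := by
          simpa [dist_eq_norm] using dist_triangle (v 2) (Q (T 5)) (v 5)
        rw [n25, norm_sub_rev (v 2) (Q (T 5)), ← h2] at tri
        rcases le_total (T 2) (T 5) with ho | ho
        · rw [abs_of_nonneg (by linarith)] at l5
          linarith [hT0 3]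
        · rw [abs_of_nonpos (by linarith)] at l5
          linarith [hT0 4]
  -- 5: Q S Q Q
  · exact no3 hd hQ (by decide) (by decide) (by decide) h2 h4 h5
      (hT0 2) (hT0 4) (hT0 5) hT2 hT4 hT5
  -- 6: Q S Q S : Q = {2,4}
  · have a := F1 hQ hT0 hE 0 (T 2) (hT0 2) (by linarith)
    rw [h2, n20] at a
    have b := F1 hQ hT0 hE 0 (T 4) (hT0 4) (by linarith)
    rw [h4, n40] at b
    have g := gap hQ h2 h4 (hT0 2) (hT0 4)
    rw [n24] at g
    rcases le_abs.mp g with hx | hx <;> linarith [hT0 2, hT0 4]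
  -- 7: Q S S Q : Q = {2,5}
  · have g := gap hQ h2 h5 (hT0 2) (hT0 5)
    rw [n25] at g
    rcases le_abs.mp g with hx | hx <;> linarith [hT0 2, hT0 5]
  -- 8: Q S S S
  · exact no3 hd hS (by decide) (by decide) (by decide) h3 h4 h5
      (hT0 3) (hT0 4) (hT0 5) hT3 hT4 hT5
  -- 9: S Q Q Q
  · exact no3 hd hQ (by decide) (by decide) (by decide) h3 h4 h5
      (hT0 3) (hT0 4) (hT0 5) hT3 hT4 hT5
  -- 10: S Q Q S : Q = {3,4}
  · have a := F1 hQ hT0 hE 0 (T 3) (hT0 3) (by linarith)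
    rw [h3, n30] at a
    have g41 := gap hQ h4 hQ1 (hT0 4) (hT0 1)
    rw [n41, abs_of_nonpos (by linarith)] at g41
    have g34 := gap hQ h3 h4 (hT0 3) (hT0 4)
    rw [n34] at g34
    rcases le_abs.mp g34 with hx | hx <;> linarith [hT0 3, hT0 4, hE1]
  -- 11: S Q S Q : Q = {3,5}
  · have a := F1 hQ hT0 hE 0 (T 3) (hT0 3) (by linarith)
    rw [h3, n30] at a
    have g51 := gap hQ h5 hQ1 (hT0 5) (hT0 1)
    rw [n51, abs_of_nonpos (by linarith)] at g51
    have g35 := gap hQ h3 h5 (hT0 3) (hT0 5)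
    rw [n35] at g35
    rcases le_abs.mp g35 with hx | hx <;> linarith [hT0 3, hT0 5, hE1]
  -- 12: S Q S S
  · exact no3 hd hS (by decide) (by decide) (by decide) h2 h4 h5
      (hT0 2) (hT0 4) (hT0 5) hT2 hT4 hT5
  -- 13: S S Q Q : main case B, Q = {4,5}, S = {2,3}
  · rcases le_total (T 2) (T 3) with hs | hs
    · have g := gap hS h3 h2 (hT0 3) (hT0 2)
      rw [n32, abs_of_nonneg (by linarith)] at g
      have g30 : 2 ≤ T 0 - T 3 := by
        have g' := gap hS h3 hS0 (hT0 3) (hT0 0)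
        rw [n30, abs_of_nonpos (by linarith)] at g'; linarith
      linarith [hT0 2, hE0]
    · have g := gap hS h2 h3 (hT0 2) (hT0 3)
      rw [n23, abs_of_nonneg (by linarith)] at g
      have g20 : Real.sqrt 3 ≤ T 0 - T 2 := by
        have g' := gap hS h2 hS0 (hT0 2) (hT0 0)
        rw [n20, abs_of_nonpos (by linarith)] at g'; linarith
      linarith [hT0 3]
  -- 14: S S Q S
  · exact no3 hd hS (by decide) (by decide) (by decide) h2 h3 h5
      (hT0 2) (hT0 3) (hT0 5) hT2 hT3 hT5
  -- 15: S S S Q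
  · exact no3 hd hS (by decide) (by decide) (by decide) h2 h3 h4
      (hT0 2) (hT0 3) (hT0 4) hT2 hT3 hT4
  -- 16: S S S S
  · exact no3 hd hS (by decide) (by decide) (by decide) h2 h3 h4
      (hT0 2) (hT0 3) (hT0 4) hT2 hT3 hT4


lemma twoLate (v : Fin 6 → Plane) (Q S : ℝ → Plane) (T : Fin 6 → ℝ)
    (hd : ∀ i j, ‖v i - v j‖ = dcl (i - j))
    (hQ : LipschitzOnWith 1 Q (Ici 0)) (hS : LipschitzOnWith 1 S (Ici 0))
    (hT0 : ∀ k, 0 ≤ T k)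
    (hvis : ∀ k, Q (T k) = v k ∨ S (T k) = v k)
    (hE : ∀ k, T k + ‖Q (T k) - v k‖ < 2 + Real.sqrt 3 / 2)
    (i j : Fin 6) (hij : i ≠ j) (h2i : 2 ≤ T i) (h2j : 2 ≤ T j) (hle : T i ≤ T j) :
    False := by
  have b1 := F1 hQ hT0 hE i 2 (by norm_num) h2i
  have b2 := F1 hQ hT0 hE j 2 (by norm_num) h2j
  have tri : ‖v i - v j‖ ≤ ‖v i - Q 2‖ + ‖Q 2 - v j‖ := by
    simpa [dist_eq_norm] using dist_triangle (v i) (Q 2) (v j)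
  rw [norm_sub_rev (v i) (Q 2)] at tri
  have hlt : dcl (i - j) < Real.sqrt 3 := by rw [← hd]; linarith
  rcases dcl_small (sub_ne_zero_of_ne hij) hlt with hm | hm
  · -- i - j = 1, so j = i - 1 : use the reflection k ↦ i - k
    have hj' : j = i - 1 := by
      have h5 : i - (i - j) = j := sub_sub_cancel i j
      rw [hm] at h5; exact h5.symm
    exact key01 (fun k => v (i - k)) Q S (fun k => T (i - k))
      (fun a b => by
        rw [hd, show (i - a) - (i - b) = b - a from sub_sub_sub_cancel_left a b i, ← hd b a, norm_sub_rev, hd])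
      hQ hS (fun k => hT0 _) (fun k => hvis _) (fun k => hE _)
      (by simpa using h2i) (by show 2 ≤ T (i - 1); rw [← hj']; exact h2j)
      (by show T (i - 0) ≤ T (i - 1); rw [sub_zero, ← hj']; exact hle)
  · -- i - j = 5, so j = i + 1 : use the rotation k ↦ i + k
    have hj' : j = i + 1 := by
      have h5 : i - (i - j) = j := sub_sub_cancel i j
      rw [hm, show (5 : Fin 6) = -1 from by decide, sub_neg_eq_add] at h5
      exact h5.symm
    exact key01 (fun k => v (i + k)) Q S (fun k => T (i + k))
      (fun a b => by rw [hd, show (i + a) - (i + b) = a - b from add_sub_add_left_eq_sub a b i])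
      hQ hS (fun k => hT0 _) (fun k => hvis _) (fun k => hE _)
      (by simpa using h2i) (by show 2 ≤ T (i + 1); rw [← hj']; exact h2j)
      (by show T (i + 0) ≤ T (i + 1); rw [add_zero, ← hj']; exact hle)

lemma key (v : Fin 6 → Plane) (Q S : ℝ → Plane) (T : Fin 6 → ℝ)
    (hd : ∀ i j, ‖v i - v j‖ = dcl (i - j))
    (hQ : LipschitzOnWith 1 Q (Ici 0)) (hS : LipschitzOnWith 1 S (Ici 0))
    (hT0 : ∀ k, 0 ≤ T k)
    (hvis : ∀ k, Q (T k) = v k ∨ S (T k) = v k)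
    (hE : ∀ k, T k + ‖Q (T k) - v k‖ < 2 + Real.sqrt 3 / 2) : False := by
  classical
  have hQcardLe : (Finset.univ.filter fun k : Fin 6 => T k < 2 ∧ Q (T k) = v k).card ≤ 2 := by
    by_contra hq; push_neg at hq
    obtain ⟨a, ha, b, hb, c, hc, hab, hac, hbc⟩ := Finset.two_lt_card.mp hq
    simp only [Finset.mem_filter, Finset.mem_univ, true_and] at ha hb hc
    exact no3 hd hQ hab hac hbc ha.2 hb.2 hc.2 (hT0 a) (hT0 b) (hT0 c) ha.1 hb.1 hc.1
  have hScardLe : (Finset.univ.filter fun k : Fin 6 => T k < 2 ∧ S (T k) = v k).card ≤ 2 := by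
    by_contra hq; push_neg at hq
    obtain ⟨a, ha, b, hb, c, hc, hab, hac, hbc⟩ := Finset.two_lt_card.mp hq
    simp only [Finset.mem_filter, Finset.mem_univ, true_and] at ha hb hc
    exact no3 hd hS hab hac hbc ha.2 hb.2 hc.2 (hT0 a) (hT0 b) (hT0 c) ha.1 hb.1 hc.1
  have hsub : (Finset.univ.filter fun k : Fin 6 => T k < 2) ⊆
      (Finset.univ.filter fun k : Fin 6 => T k < 2 ∧ Q (T k) = v k) ∪
      (Finset.univ.filter fun k : Fin 6 => T k < 2 ∧ S (T k) = v k) := by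
    intro k hk
    simp only [Finset.mem_filter, Finset.mem_univ, true_and, Finset.mem_union] at hk ⊢
    rcases hvis k with h | h
    · exact Or.inl ⟨hk, h⟩
    · exact Or.inr ⟨hk, h⟩
  have h4 : (Finset.univ.filter fun k : Fin 6 => T k < 2).card ≤ 4 := by
    have := (Finset.card_le_card hsub).trans (Finset.card_union_le _ _)
    omega
  have h6 : (Finset.univ.filter fun k : Fin 6 => T k < 2).card +
      (Finset.univ.filter fun k : Fin 6 => ¬ T k < 2).card = 6 := by
    rw [Finset.card_filter_add_card_filter_not]
    simp
  obtain ⟨i, hi, j, hj, hij⟩ := Finset.one_lt_card.mp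
    (show 1 < (Finset.univ.filter fun k : Fin 6 => ¬ T k < 2).card by omega)
  simp only [Finset.mem_filter, Finset.mem_univ, true_and, not_lt] at hi hj
  rcases le_total (T i) (T j) with h | h
  · exact twoLate v Q S T hd hQ hS hT0 hvis hE i j hij hi hj h
  · exact twoLate v Q S T hd hQ hS hT0 hvis hE j i hij.symm hj hi h


lemma sqrt4 : Real.sqrt 4 = 2 := by
  rw [show (4:ℝ) = 2^2 by norm_num, Real.sqrt_sq (by norm_num)]

lemma circlePt_sub_norm (a b : ℝ) :
    ‖circlePt a - circlePt b‖ = Real.sqrt (2 - 2 * Real.cos (a - b)) := by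
  rw [EuclideanSpace.norm_eq]
  simp [circlePt, WithLp.equiv_symm_apply, Fin.sum_univ_two, Real.norm_eq_abs, sq_abs]
  congr 1
  rw [Real.cos_sub]
  nlinarith [Real.sin_sq_add_cos_sq a, Real.sin_sq_add_cos_sq b]

lemma aux_cos : ∀ m : Fin 6, Real.sqrt (2 - 2 * Real.cos ((m : ℕ) * π / 3)) = dcl m := by
  intro m
  fin_cases m <;>
    [show Real.sqrt (2 - 2 * Real.cos (((0:ℕ):ℝ) * π / 3)) = dcl 0;
     show Real.sqrt (2 - 2 * Real.cos (((1:ℕ):ℝ) * π / 3)) = dcl 1;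
     show Real.sqrt (2 - 2 * Real.cos (((2:ℕ):ℝ) * π / 3)) = dcl 2;
     show Real.sqrt (2 - 2 * Real.cos (((3:ℕ):ℝ) * π / 3)) = dcl 3;
     show Real.sqrt (2 - 2 * Real.cos (((4:ℕ):ℝ) * π / 3)) = dcl 4;
     show Real.sqrt (2 - 2 * Real.cos (((5:ℕ):ℝ) * π / 3)) = dcl 5]
  · rw [dcl0]; norm_num
  · rw [dcl1]; rw [show (((1:ℕ)):ℝ) * π / 3 = π/3 by norm_num]
    rw [Real.cos_pi_div_three]; norm_num
  · rw [dcl2]; rw [show (((2:ℕ)):ℝ) * π / 3 = π - π/3 by push_cast; ring]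
    rw [Real.cos_pi_sub, Real.cos_pi_div_three]; norm_num
  · rw [dcl3]; rw [show (((3:ℕ)):ℝ) * π / 3 = π by push_cast; ring]
    rw [Real.cos_pi]; norm_num [sqrt4]
  · rw [dcl4]; rw [show (((4:ℕ)):ℝ) * π / 3 = π + π/3 by push_cast; ring]
    rw [Real.cos_add, Real.cos_pi, Real.sin_pi, Real.cos_pi_div_three]; norm_num
  · rw [dcl5]; rw [show (((5:ℕ)):ℝ) * π / 3 = 2*π - π/3 by push_cast; ring]
    rw [Real.cos_sub, Real.cos_two_pi, Real.sin_two_pi, Real.cos_pi_div_three]; norm_num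

lemma fin_sub_int : ∀ i j : Fin 6,
    (((i - j : Fin 6) : ℕ) : ℤ) = (i : ℕ) - (j : ℕ) ∨
    (((i - j : Fin 6) : ℕ) : ℤ) = (i : ℕ) - (j : ℕ) + 6 := by decide

lemma hexdist (c : Plane) (ψ : ℝ) (i j : Fin 6) :
    ‖hexVertex c ψ i - hexVertex c ψ j‖ = dcl (i - j) := by
  have hsub : hexVertex c ψ i - hexVertex c ψ j
      = circlePt (ψ + (i : ℕ) * π / 3) - circlePt (ψ + (j : ℕ) * π / 3) := by
    rw [hexVertex, hexVertex, add_sub_add_left_eq_sub]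
  rw [hsub, circlePt_sub_norm]
  rcases fin_sub_int i j with h | h
  · have h' := congrArg (fun z : ℤ => (z : ℝ)) h
    push_cast at h'
    rw [show (ψ + (i:ℕ) * π / 3) - (ψ + (j:ℕ) * π / 3)
        = (((i - j : Fin 6) : ℕ) : ℝ) * π / 3 by rw [h']; ring]
    exact aux_cos _
  · have h' := congrArg (fun z : ℤ => (z : ℝ)) h
    push_cast at h'
    rw [show (ψ + (i:ℕ) * π / 3) - (ψ + (j:ℕ) * π / 3)
        = (((i - j : Fin 6) : ℕ) : ℝ) * π / 3 - 2 * π by rw [h']; ring]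
    rw [Real.cos_sub_two_pi]
    exact aux_cos _

end HexLB

/-- for any 1-Lipschitz queen and servant trajectories (with arbitrary
starting positions), some vertex of a unit-side regular hexagon is either never visited,
or the queen's evacuation time for an exit at that vertex is at least `2 + √3/2`. -/
theorem hexagon_lower_bound (c : Plane) (ψ : ℝ) (Q S : ℝ → Plane)
    (hQ : LipschitzOnWith 1 Q (Set.Ici 0)) (hS : LipschitzOnWith 1 S (Set.Ici 0)) :
    ∃ k : Fin 6,
      (¬ ∃ t : ℝ, 0 ≤ t ∧ (Q t = hexVertex c ψ k ∨ S t = hexVertex c ψ k)) ∨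
      2 + Real.sqrt 3 / 2 ≤
        hexVisitTime Q S (hexVertex c ψ k) +
          ‖Q (hexVisitTime Q S (hexVertex c ψ k)) - hexVertex c ψ k‖ := by
  classical
  by_contra hcon
  push_neg at hcon
  have hmem : ∀ k : Fin 6, 0 ≤ hexVisitTime Q S (hexVertex c ψ k) ∧
      (Q (hexVisitTime Q S (hexVertex c ψ k)) = hexVertex c ψ k ∨
       S (hexVisitTime Q S (hexVertex c ψ k)) = hexVertex c ψ k) := by
    intro k
    have hne : Set.Nonempty {t : ℝ | 0 ≤ t ∧ (Q t = hexVertex c ψ k ∨ S t = hexVertex c ψ k)} :=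
      (hcon k).1
    have hbd : BddBelow {t : ℝ | 0 ≤ t ∧ (Q t = hexVertex c ψ k ∨ S t = hexVertex c ψ k)} :=
      ⟨0, fun x hx => hx.1⟩
    have hcl : IsClosed {t : ℝ | 0 ≤ t ∧ (Q t = hexVertex c ψ k ∨ S t = hexVertex c ψ k)} := by
      have e : {t : ℝ | 0 ≤ t ∧ (Q t = hexVertex c ψ k ∨ S t = hexVertex c ψ k)} =
          (Set.Ici 0 ∩ Q ⁻¹' {hexVertex c ψ k}) ∪ (Set.Ici 0 ∩ S ⁻¹' {hexVertex c ψ k}) := by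
        ext t; simp [Set.mem_Ici, and_or_left]
      rw [e]
      exact (hQ.continuousOn.preimage_isClosed_of_isClosed isClosed_Ici
          isClosed_singleton).union
        (hS.continuousOn.preimage_isClosed_of_isClosed isClosed_Ici isClosed_singleton)
    exact hcl.csInf_mem hne hbd
  exact HexLB.key (hexVertex c ψ) Q S (fun k => hexVisitTime Q S (hexVertex c ψ k))
    (HexLB.hexdist c ψ) hQ hS (fun k => (hmem k).1) (fun k => (hmem k).2)
    (fun k => (hcon k).2)
end
end

section
/- Let S, Q : ℝ → ℝ² be differentiable on an interval I with ‖S'(t)‖ = ‖Q'(t)‖ = 1 and Q(t) ≠ S(t) for all t ∈ I, and for t ∈ I let cos φ(t) = ⟨S'(t), Q(t) − S(t)⟩ / ‖Q(t) − S(t)‖ and cos θ(t) = ⟨Q'(t), S(t) − Q(t)⟩ / ‖S(t) − Q(t)‖. Then the function t ↦ t + ‖Q(t) − S(t)‖ is strictly increasing on I if cos φ(t) + cos θ(t) < 1 for all t ∈ I, strictly decreasing on I if cos φ(t) + cos θ(t) > 1 for all t ∈ I, and constant on I if cos φ(t) + cos θ(t) = 1 for all t ∈ I. -/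
open Real Set MeasureTheory
open scoped RealInnerProductSpace

noncomputable section

/-- Derivative of `t ↦ ‖Q t - S t‖`. -/
lemma hasDerivAt_norm_sub {Q S : ℝ → Plane} {t : ℝ}
    (hQ : DifferentiableAt ℝ Q t) (hS : DifferentiableAt ℝ S t) (hne : Q t ≠ S t) :
    HasDerivAt (fun u => ‖Q u - S u‖)
      (⟪deriv Q t - deriv S t, Q t - S t⟫ / ‖Q t - S t‖) t := by
  have hg : HasDerivAt (fun u => Q u - S u) (deriv Q t - deriv S t) t :=
    hQ.hasDerivAt.sub hS.hasDerivAt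
  have h1 : HasDerivAt (fun u => ⟪Q u - S u, Q u - S u⟫)
      (⟪Q t - S t, deriv Q t - deriv S t⟫ + ⟪deriv Q t - deriv S t, Q t - S t⟫) t :=
    hg.inner ℝ hg
  have hgt : Q t - S t ≠ 0 := sub_ne_zero.2 hne
  have hinner : ⟪Q t - S t, Q t - S t⟫ ≠ 0 := by
    rw [real_inner_self_eq_norm_sq]
    exact pow_ne_zero 2 (norm_ne_zero_iff.2 hgt)
  have h2 := h1.sqrt hinner
  have hnorm : ∀ x : Plane, Real.sqrt ⟪x, x⟫ = ‖x‖ := fun x => by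
    rw [real_inner_self_eq_norm_mul_norm, Real.sqrt_mul_self (norm_nonneg x)]
  have e1 : (fun y => Real.sqrt ⟪Q y - S y, Q y - S y⟫) = fun y => ‖Q y - S y‖ :=
    funext fun y => hnorm _
  rw [e1, hnorm, real_inner_comm (Q t - S t)] at h2
  convert h2 using 1
  have hn : ‖Q t - S t‖ ≠ 0 := norm_ne_zero_iff.2 hgt
  field_simp
  rw [real_inner_comm (Q t - S t)]
  ring

/-- `t + ‖Q t - S t‖` is strictly increasing, strictly decreasing or
constant on an interval `I` according to whether `cos φ + cos θ` is `< 1`, `> 1`, or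
`= 1` throughout `I`. -/
theorem monotonicity_of_time_plus_dist
    (I : Set ℝ) (hI : I.OrdConnected) (S Q : ℝ → Plane)
    (hS : ∀ t ∈ I, DifferentiableAt ℝ S t) (hQ : ∀ t ∈ I, DifferentiableAt ℝ Q t)
    (hSspeed : ∀ t ∈ I, ‖deriv S t‖ = 1) (hQspeed : ∀ t ∈ I, ‖deriv Q t‖ = 1)
    (hne : ∀ t ∈ I, Q t ≠ S t) :
    ((∀ t ∈ I, ⟪deriv S t, Q t - S t⟫ / ‖Q t - S t‖ +
        ⟪deriv Q t, S t - Q t⟫ / ‖S t - Q t‖ < 1) →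
      StrictMonoOn (fun t => t + ‖Q t - S t‖) I) ∧
    ((∀ t ∈ I, 1 < ⟪deriv S t, Q t - S t⟫ / ‖Q t - S t‖ +
        ⟪deriv Q t, S t - Q t⟫ / ‖S t - Q t‖) →
      StrictAntiOn (fun t => t + ‖Q t - S t‖) I) ∧
    ((∀ t ∈ I, ⟪deriv S t, Q t - S t⟫ / ‖Q t - S t‖ +
        ⟪deriv Q t, S t - Q t⟫ / ‖S t - Q t‖ = 1) →
      ∀ s ∈ I, ∀ t ∈ I, s + ‖Q s - S s‖ = t + ‖Q t - S t‖) := by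
  have hconv : Convex ℝ I := convex_iff_ordConnected.mpr hI
  have key : ∀ t ∈ I, HasDerivAt (fun u => u + ‖Q u - S u‖)
      (1 + ⟪deriv Q t - deriv S t, Q t - S t⟫ / ‖Q t - S t‖) t := fun t ht =>
    (hasDerivAt_id t).add (hasDerivAt_norm_sub (hQ t ht) (hS t ht) (hne t ht))
  have hcont : ContinuousOn (fun u => u + ‖Q u - S u‖) I := fun t ht =>
    ((key t ht).continuousAt).continuousWithinAt
  have hdiff : DifferentiableOn ℝ (fun u => u + ‖Q u - S u‖) (interior I) := fun x hx =>
    ((key x (interior_subset hx)).differentiableAt).differentiableWithinAt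
  have hc : ∀ t ∈ I, ⟪deriv S t, Q t - S t⟫ / ‖Q t - S t‖ +
      ⟪deriv Q t, S t - Q t⟫ / ‖S t - Q t‖ =
      -(⟪deriv Q t - deriv S t, Q t - S t⟫ / ‖Q t - S t‖) := by
    intro t ht
    rw [show S t - Q t = -(Q t - S t) from (neg_sub _ _).symm, norm_neg,
      inner_neg_right, inner_sub_left]
    ring
  refine ⟨fun h => ?_, fun h => ?_, fun h => ?_⟩
  · refine strictMonoOn_of_deriv_pos hconv hcont fun x hx => ?_
    have hxI := interior_subset hx
    rw [(key x hxI).deriv]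
    have h1 := h x hxI
    rw [hc x hxI] at h1
    linarith
  · refine strictAntiOn_of_deriv_neg hconv hcont fun x hx => ?_
    have hxI := interior_subset hx
    rw [(key x hxI).deriv]
    have h1 := h x hxI
    rw [hc x hxI] at h1
    linarith
  · have hzero : ∀ x ∈ interior I, deriv (fun u => u + ‖Q u - S u‖) x = 0 := by
      intro x hx
      have hxI := interior_subset hx
      rw [(key x hxI).deriv]
      have h1 := h x hxI
      rw [hc x hxI] at h1
      linarith
    have hmono : MonotoneOn (fun u => u + ‖Q u - S u‖) I :=
      monotoneOn_of_deriv_nonneg hconv hcont hdiff fun x hx => (hzero x hx).ge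
    have hanti : AntitoneOn (fun u => u + ‖Q u - S u‖) I :=
      antitoneOn_of_deriv_nonpos hconv hcont hdiff fun x hx => (hzero x hx).le
    intro s hs t ht
    rcases le_total s t with hst | hst
    · exact le_antisymm (hmono hs ht hst) (hanti hs ht hst)
    · exact le_antisymm (hanti ht hs hst) (hmono ht hs hst)
end
end

section
/- Let u and ε be reals with 0 < u ≤ π and ε > 0, and let A ⊆ [0, 2π) be a Lebesgue-measurable set of angles with measure at least u + ε. Then there exist a, b ∈ A whose circular distance min(|a − b|, 2π − |a − b|) is at least u. -/
open Real Set MeasureTheory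
open scoped RealInnerProductSpace

noncomputable section

/-- a measurable set of angles of measure at least `u + ε` contains two
angles at circular distance at least `u`. -/
theorem exists_far_apart_angles
    (u ε : ℝ) (hu : 0 < u) (huπ : u ≤ π) (hε : 0 < ε)
    (A : Set ℝ) (hA : A ⊆ Set.Ico 0 (2 * π)) (hAm : MeasurableSet A)
    (hμ : ENNReal.ofReal (u + ε) ≤ volume A) :
    ∃ a ∈ A, ∃ b ∈ A, u ≤ min |a - b| (2 * π - |a - b|) := by
  by_contra hcon
  push_neg at hcon
  have hπ : (0:ℝ) < π := Real.pi_pos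
  -- key emptiness fact
  have key : ∀ c : ℝ, u ≤ |c| → (|c| ≤ 2 * π - u ∨ 2 * π ≤ |c|) →
      ∀ x, x ∈ A → x - c ∉ A := by
    intro c hc hc2 x hx hxc
    have hx1 := hA hx
    have hx2 := hA hxc
    rw [mem_Ico] at hx1 hx2
    have habs : |x - (x - c)| = |c| := by congr 1; ring
    rcases hc2 with hc2 | hc2
    · have hlt := hcon x hx (x - c) hxc
      rw [habs] at hlt
      rcases min_lt_iff.mp hlt with h | h <;> linarith
    · rcases abs_cases c with ⟨h1, h1'⟩ | ⟨h1, h1'⟩ <;> rw [h1] at hc2 <;> linarith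
  -- the autocorrelation function
  set g : ℝ → ENNReal := fun t => ∫⁻ x, A.indicator 1 x * A.indicator 1 (x - t) with hg
  have hind : Measurable (A.indicator (1 : ℝ → ENNReal)) :=
    measurable_const.indicator hAm
  have hF : Measurable (Function.uncurry fun t x =>
      A.indicator (1 : ℝ → ENNReal) x * A.indicator 1 (x - t)) := by
    apply Measurable.mul
    · exact hind.comp measurable_snd
    · exact hind.comp (measurable_snd.sub measurable_fst)
  have gmeas : Measurable g := hF.lintegral_prod_right
  have gvol : ∀ t, g t = volume (A ∩ (fun x => x - t) ⁻¹' A) := by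
    intro t
    have hmeas : MeasurableSet (A ∩ (fun x => x - t) ⁻¹' A) :=
      hAm.inter (hAm.preimage (measurable_id.sub measurable_const))
    rw [← lintegral_indicator_one hmeas]
    exact lintegral_congr fun x => by
      by_cases h1 : x ∈ A <;> by_cases h2 : x - t ∈ A <;>
        simp [Set.indicator_apply, h1, h2, Set.mem_inter_iff, Set.mem_preimage]
  -- Fubini
  have fubini : ∫⁻ t, g t = volume A * volume A := by
    rw [hg]
    rw [lintegral_lintegral_swap hF.aemeasurable]
    have inner : ∀ x : ℝ, (∫⁻ t, A.indicator (1 : ℝ → ENNReal) x * A.indicator 1 (x - t))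
        = A.indicator 1 x * volume A := by
      intro x
      have hm : Measurable fun t : ℝ => A.indicator (1 : ℝ → ENNReal) (x - t) :=
        hind.comp (measurable_const.sub measurable_id)
      rw [lintegral_const_mul _ hm]
      congr 1
      rw [(Measure.measurePreserving_sub_left volume x).lintegral_comp hind]
      exact lintegral_indicator_one hAm
    simp_rw [inner]
    rw [lintegral_mul_const _ hind]
    rw [lintegral_indicator_one hAm]
  -- g vanishes when forced
  have gzero : ∀ t : ℝ, u ≤ |t| → (|t| ≤ 2 * π - u ∨ 2 * π ≤ |t|) → g t = 0 := by
    intro t h1 h2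
    rw [gvol]
    have : A ∩ (fun x => x - t) ⁻¹' A = ∅ := by
      rw [Set.eq_empty_iff_forall_notMem]
      rintro x ⟨hx, hx2⟩
      exact key t h1 h2 x hx hx2
    rw [this, measure_empty]
  -- pointwise disjointness bound
  have pointwise : ∀ t : ℝ, g (t + 0) + g (t + -(2*π)) + g (t + (2*π - u)) + g (t + -u)
      ≤ volume A := by
    intro t
    have hBm : ∀ c : ℝ, MeasurableSet (A ∩ (fun x => x - c) ⁻¹' A) :=
      fun c => hAm.inter (hAm.preimage (measurable_id.sub measurable_const))
    have hdisj : ∀ c d v : ℝ, c - d = v → u ≤ v → (v ≤ 2 * π - u ∨ 2 * π ≤ v) →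
        Disjoint (A ∩ (fun x => x - c) ⁻¹' A) (A ∩ (fun x => x - d) ⁻¹' A) := by
      intro c d v hv h1 h2
      have hval : |c - d| = v := by rw [hv]; exact abs_of_nonneg (by linarith)
      rw [← hval] at h1 h2
      rw [Set.disjoint_left]
      rintro x ⟨hx, hxc⟩ ⟨_, hxd⟩
      have he : (x - d) - (c - d) = x - c := by ring
      exact key (c - d) h1 h2 (x - d) hxd (he ▸ hxc)
    have d01 := hdisj (t + 0) (t + -(2*π)) (2*π) (by ring) (by linarith) (Or.inr le_rfl)
    have d02 := (hdisj (t + (2*π - u)) (t + 0) (2*π - u) (by ring) (by linarith)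
      (Or.inl le_rfl)).symm
    have d03 := hdisj (t + 0) (t + -u) u (by ring) le_rfl (Or.inl (by linarith))
    have d12 := (hdisj (t + (2*π - u)) (t + -(2*π)) (4*π - u) (by ring) (by linarith)
      (Or.inr (by linarith))).symm
    have d13 := (hdisj (t + -u) (t + -(2*π)) (2*π - u) (by ring) (by linarith)
      (Or.inl le_rfl)).symm
    have d23 := hdisj (t + (2*π - u)) (t + -u) (2*π) (by ring) (by linarith) (Or.inr le_rfl)
    rw [gvol, gvol, gvol, gvol]
    rw [← measure_union d01 (hBm _), ← measure_union (d02.union_left d12) (hBm _),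
      ← measure_union ((d03.union_left d13).union_left d23) (hBm _)]
    apply measure_mono
    simp only [Set.union_subset_iff]
    exact ⟨⟨⟨Set.inter_subset_left, Set.inter_subset_left⟩, Set.inter_subset_left⟩,
      Set.inter_subset_left⟩
  -- support of g
  have hu2 : u ≤ 2*π - u := by linarith
  set S : Set ℝ := Ico (-(2*π)) (-(2*π)+u) ∪ Ico (-u) (-u+u) ∪ Ico (0:ℝ) (0+u) ∪
      Ico (2*π-u) (2*π-u+u) with hS
  have hSm : MeasurableSet S := (((measurableSet_Ico.union measurableSet_Ico).union
    measurableSet_Ico).union measurableSet_Ico)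
  have hsupp : ∀ t : ℝ, t ∉ S → g t = 0 := by
    intro t ht
    simp only [hS, Set.mem_union, Set.mem_Ico, not_or, not_and, not_lt] at ht
    obtain ⟨⟨⟨h1, h2⟩, h3⟩, h4⟩ := ht
    rcases le_or_gt 0 t with hs | hs
    · rcases le_or_gt (2*π) t with h5 | h5
      · exact gzero t (by rw [abs_of_nonneg hs]; linarith) (by rw [abs_of_nonneg hs]; right; linarith)
      · have hut : u ≤ t := by
          by_contra hc; push_neg at hc
          have := h3 hs; linarith
        have h2πu : t ≤ 2*π - u := by
          by_contra hc; push_neg at hc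
          have := h4 (by linarith); linarith
        exact gzero t (by rw [abs_of_nonneg hs]; linarith) (by rw [abs_of_nonneg hs]; left; linarith)
    · rcases le_or_gt t (-(2*π)) with h5 | h5
      · exact gzero t (by rw [abs_of_neg hs]; linarith) (by rw [abs_of_neg hs]; right; linarith)
      · have hut : t ≤ -u := by
          by_contra hc; push_neg at hc
          have := h2 hc.le; linarith
        have h2πu : -(2*π) + u ≤ t := h1 h5.le
        exact gzero t (by rw [abs_of_neg hs]; linarith)
          (by rw [abs_of_neg hs]; left; linarith)
  -- integral over ℝ equals integral over S
  have hIS : ∫⁻ t, g t = ∫⁻ t in S, g t := by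
    rw [← lintegral_indicator hSm]
    exact lintegral_congr fun t => (Set.indicator_apply_eq_self.mpr (fun h => hsupp t h)).symm
  -- shift lemma
  have shift : ∀ c : ℝ, ∫⁻ t in Ico c (c+u), g t = ∫⁻ t in Ico (0:ℝ) (0+u), g (t + c) := by
    intro c
    rw [← lintegral_indicator measurableSet_Ico, ← lintegral_indicator measurableSet_Ico]
    rw [← lintegral_add_right_eq_self (fun t => (Ico c (c+u)).indicator g t) c]
    apply lintegral_congr
    intro t
    by_cases ht : t ∈ Ico (0:ℝ) (0+u)
    · rw [Set.indicator_of_mem ht]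
      rw [Set.indicator_of_mem (by rw [mem_Ico] at ht ⊢; constructor <;> linarith [ht.1, ht.2])]
    · rw [Set.indicator_of_notMem ht]
      rw [Set.indicator_of_notMem (by rw [mem_Ico] at ht ⊢; intro hc; exact ht ⟨by linarith [hc.1], by linarith [hc.2]⟩)]
  -- disjointness of the four intervals
  have hd1 : Disjoint (Ico (-(2*π)) (-(2*π)+u)) (Ico (-u) (-u+u)) := by
    rw [Set.disjoint_left]; rintro x ⟨a1, a2⟩ ⟨b1, b2⟩; linarith
  have hd2 : Disjoint (Ico (-(2*π)) (-(2*π)+u) ∪ Ico (-u) (-u+u)) (Ico (0:ℝ) (0+u)) := by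
    rw [Set.disjoint_left]; rintro x (⟨a1, a2⟩ | ⟨a1, a2⟩) ⟨b1, b2⟩ <;> linarith
  have hd3 : Disjoint (Ico (-(2*π)) (-(2*π)+u) ∪ Ico (-u) (-u+u) ∪ Ico (0:ℝ) (0+u))
      (Ico (2*π-u) (2*π-u+u)) := by
    rw [Set.disjoint_left]; rintro x ((⟨a1, a2⟩ | ⟨a1, a2⟩) | ⟨a1, a2⟩) ⟨b1, b2⟩ <;> linarith
  -- put it together
  have main : volume A * volume A ≤ volume A * ENNReal.ofReal u := by
    rw [← fubini, hIS, hS]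
    rw [lintegral_union measurableSet_Ico hd3, lintegral_union measurableSet_Ico hd2,
      lintegral_union measurableSet_Ico hd1]
    rw [shift (-(2*π)), shift (-u), shift (0:ℝ), shift (2*π-u)]
    have hmeas1 : Measurable fun t : ℝ => g (t + -(2*π)) :=
      gmeas.comp (measurable_id.add_const _)
    have hmeas2 : Measurable fun t : ℝ => g (t + -u) :=
      gmeas.comp (measurable_id.add_const _)
    have hmeas3 : Measurable fun t : ℝ => g (t + 0) :=
      gmeas.comp (measurable_id.add_const _)
    rw [← lintegral_add_left' hmeas1.aemeasurable, ← lintegral_add_left'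
      (show Measurable fun t => g (t + -(2*π)) + g (t + -u) from hmeas1.add hmeas2).aemeasurable, ← lintegral_add_left'
      (show Measurable fun t => g (t + -(2*π)) + g (t + -u) + g (t + 0) from (hmeas1.add hmeas2).add hmeas3).aemeasurable]
    calc ∫⁻ t in Ico (0:ℝ) (0+u), (g (t + -(2*π)) + g (t + -u) + g (t + 0) + g (t + (2*π-u)))
        ≤ ∫⁻ _t in Ico (0:ℝ) (0+u), volume A := by
          apply lintegral_mono
          intro t
          calc g (t + -(2*π)) + g (t + -u) + g (t + 0) + g (t + (2*π-u))
              = g (t + 0) + g (t + -(2*π)) + g (t + (2*π-u)) + g (t + -u) := by ring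
            _ ≤ volume A := pointwise t
      _ = volume A * ENNReal.ofReal u := by
          rw [setLIntegral_const, Real.volume_Ico]
          norm_num
  -- conclude
  have hfin : volume A ≠ ⊤ := by
    have : volume A ≤ volume (Ico 0 (2*π)) := measure_mono hA
    rw [Real.volume_Ico] at this
    exact ne_top_of_le_ne_top ENNReal.ofReal_ne_top this
  have h0 : volume A ≠ 0 := by
    intro h
    rw [h, nonpos_iff_eq_zero] at hμ
    rw [ENNReal.ofReal_eq_zero] at hμ
    linarith
  have hle : volume A ≤ ENNReal.ofReal u := (ENNReal.mul_le_mul_iff_right h0 hfin).mp main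
  have : ENNReal.ofReal (u + ε) ≤ ENNReal.ofReal u := le_trans hμ hle
  rw [ENNReal.ofReal_le_ofReal_iff (by linarith)] at this
  linarith
end
end

section
/- In the priority evacuation model with 2 servants, let Q, S₁, S₂ be trajectories and B a real with B < 1 + π such that the trajectories evacuate the queen in time B. Then the arc measure of the set of points of the unit circle visited by the queen (at some time) is at least 2(1 + π − B). -/
/-!
A point of the circle that the queen does not visit first is first visited by a servant at a
time in `[1, B]`: a servant needs time `1` to reach the circle, and the queen must still walk
to the point by time `B`. During `[1, B]` a `1`-Lipschitz servant sweeps a set of angles of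
measure at most `B - 1`, since the angle of a point of the circle is, on an arc of half-width
`l`, a `1 / cos l`-Lipschitz function of the point, and `l` can be taken arbitrarily small.
Hence `2π ≤ |queen arc| + n (B - 1)`.
-/

open Real Set MeasureTheory
open scoped RealInnerProductSpace

noncomputable section

open scoped NNReal ENNReal

lemma norm_circlePt (θ : ℝ) : ‖circlePt θ‖ = 1 := by
  simp [EuclideanSpace.norm_eq, circlePt, Fin.sum_univ_two]

lemma continuous_circlePt : Continuous circlePt :=
  (PiLp.continuous_toLp 2 _).comp (continuous_pi fun i ↦ by fin_cases i <;> simpa using by fun_prop)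

lemma circlePt_injOn_Ico {a b : ℝ} (h : b - a ≤ 2 * π) : InjOn circlePt (Ico a b) := by
  intro x hx y hy hxy
  have hcos : cos x = cos y := congrArg (· 0) hxy
  have hsin : sin x = sin y := congrArg (· 1) hxy
  refine Circle.exp_injOn_Ico h hx hy (Circle.ext ?_)
  simp [Circle.coe_exp, Complex.exp_mul_I, ← Complex.ofReal_cos, ← Complex.ofReal_sin, hcos, hsin]

lemma inner_circlePt_add_pi_div_two (m θ : ℝ) :
    ⟪circlePt (m + π / 2), circlePt θ⟫ = sin (θ - m) := by
  simp [circlePt, PiLp.inner_apply, Fin.sum_univ_two, cos_add_pi_div_two, sin_add_pi_div_two,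
    sin_sub]
  ring

lemma lipschitzOnWith_arcsin {s : ℝ} (hs : s < 1) :
    LipschitzOnWith (1 / √(1 - s ^ 2)).toNNReal arcsin (Icc (-s) s) := by
  refine (convex_Icc _ _).lipschitzOnWith_of_nnnorm_hasDerivWithin_le
    (fun x hx ↦ (hasDerivAt_arcsin (by linarith [hx.1]) (by linarith [hx.2])).hasDerivWithinAt)
    fun x hx ↦ ?_
  have hx2 : x ^ 2 ≤ s ^ 2 := sq_le_sq' hx.1 hx.2
  have hpos : 0 < √(1 - s ^ 2) := Real.sqrt_pos.2 (by nlinarith [hx.1, hx.2])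
  rw [← NNReal.coe_le_coe, coe_nnnorm, Real.norm_eq_abs, abs_of_nonneg (by positivity),
    Real.coe_toNNReal _ (by positivity)]
  exact one_div_le_one_div_of_le hpos (Real.sqrt_le_sqrt (by linarith))

/-- On an arc of half-width `l`, the angle is recovered from the point as
`m + arcsin ⟪circlePt (m + π / 2), ·⟫`, which is `1 / cos l`-Lipschitz. -/
lemma volume_le_ofReal_mul_hausdorffMeasure_image_circlePt {A : Set ℝ} {m l : ℝ} (hl0 : 0 ≤ l)
    (hl : l < π / 2) (hA : A ⊆ Icc (m - l) (m + l)) :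
    volume A ≤ ENNReal.ofReal (1 / cos l) * μH[1] (circlePt '' A) := by
  have hcos : cos l = √(1 - sin l ^ 2) := cos_eq_sqrt_one_sub_sin_sq (by linarith) hl.le
  have hsin : sin l < 1 := by
    have := cos_pos_of_mem_Ioo ⟨by linarith, hl⟩
    nlinarith [sin_sq_add_cos_sq l, sin_le_one l]
  set v := circlePt (m + π / 2)
  have hv : LipschitzWith 1 (fun p : Plane ↦ ⟪v, p⟫) :=
    (innerSL ℝ v).lipschitz.weaken (by simp [← NNReal.coe_le_coe, v, norm_circlePt])
  have harcsin : LipschitzOnWith (1 / cos l).toNNReal (fun x ↦ m + arcsin x)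
      (Icc (-sin l) (sin l)) := fun x hx y hy ↦ by
    simpa only [edist_add_left, hcos] using lipschitzOnWith_arcsin hsin hx hy
  have hsin_sub : ∀ θ ∈ A, sin (θ - m) ∈ Icc (-sin l) (sin l) ∧ arcsin (sin (θ - m)) = θ - m := by
    intro θ hθ
    obtain ⟨h1, h2⟩ := hA hθ
    refine ⟨⟨?_, ?_⟩, arcsin_sin (by linarith) (by linarith)⟩
    · rw [← sin_neg]
      exact sin_le_sin_of_le_of_le_pi_div_two (by linarith) (by linarith) (by linarith)
    · exact sin_le_sin_of_le_of_le_pi_div_two (by linarith) (by linarith) (by linarith)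
  have hmaps : MapsTo (fun p : Plane ↦ ⟪v, p⟫) (circlePt '' A) (Icc (-sin l) (sin l)) := by
    rintro _ ⟨θ, hθ, rfl⟩
    simpa [v, inner_circlePt_add_pi_div_two] using (hsin_sub θ hθ).1
  have hsub : A ⊆ (fun p : Plane ↦ m + arcsin ⟪v, p⟫) '' (circlePt '' A) := fun θ hθ ↦
    ⟨circlePt θ, mem_image_of_mem _ hθ, by
      simp [v, inner_circlePt_add_pi_div_two, (hsin_sub θ hθ).2]⟩
  calc volume A = μH[1] A := by rw [hausdorffMeasure_real]
    _ ≤ μH[1] ((fun p : Plane ↦ m + arcsin ⟪v, p⟫) '' (circlePt '' A)) := measure_mono hsub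
    _ ≤ ((1 / cos l).toNNReal * 1 : ℝ≥0) ^ (1 : ℝ) * μH[1] (circlePt '' A) :=
      (harcsin.comp hv.lipschitzOnWith hmaps).hausdorffMeasure_image_le zero_le_one
    _ = ENNReal.ofReal (1 / cos l) * μH[1] (circlePt '' A) := by
      rw [mul_one, ENNReal.rpow_one, ENNReal.ofReal]

open Filter Topology Function in
lemma volume_le_hausdorffMeasure_image_circlePt {A : Set ℝ} (hA : MeasurableSet A)
    (hinj : InjOn circlePt A) : volume A ≤ μH[1] (circlePt '' A) := by
  have hbound : ∀ l ∈ Ioo 0 (π / 2),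
      volume A ≤ ENNReal.ofReal (1 / cos l) * μH[1] (circlePt '' A) := by
    rintro l ⟨hl0, hl⟩
    set I : ℤ → Set ℝ := fun n ↦ A ∩ Ico (n • (2 * l)) ((n + 1) • (2 * l))
    have hcover : A = ⋃ n, I n := by
      simp only [I, ← inter_iUnion, iUnion_Ico_zsmul (by positivity : 0 < 2 * l), inter_univ]
    have hwindow : ∀ n, I n ⊆ Icc ((n • (2 * l) + l) - l) ((n • (2 * l) + l) + l) := by
      rintro n θ ⟨-, h1, h2⟩
      simp only [zsmul_eq_mul, Int.cast_add, Int.cast_one] at h1 h2 ⊢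
      constructor <;> linarith
    have hdisj : Pairwise (Disjoint on fun n ↦ circlePt '' I n) := fun j k hjk ↦
      ((pairwise_disjoint_Ico_zsmul (2 * l) hjk).mono inter_subset_right
        inter_subset_right).image hinj inter_subset_left inter_subset_left
    have hmeas : ∀ n, MeasurableSet (circlePt '' I n) := fun n ↦
      (hA.inter measurableSet_Ico).image_of_continuousOn_injOn continuous_circlePt.continuousOn
        (hinj.mono inter_subset_left)
    calc volume A ≤ ∑' n, volume (I n) := by
          conv_lhs => rw [hcover]
          exact measure_iUnion_le _
      _ ≤ ∑' n, ENNReal.ofReal (1 / cos l) * μH[1] (circlePt '' I n) := ENNReal.tsum_le_tsum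
          fun n ↦ volume_le_ofReal_mul_hausdorffMeasure_image_circlePt hl0.le hl (hwindow n)
      _ = ENNReal.ofReal (1 / cos l) * μH[1] (circlePt '' A) := by
          rw [ENNReal.tsum_mul_left, ← measure_iUnion hdisj hmeas, ← image_iUnion, ← hcover]
  have hlim : Tendsto (fun l ↦ ENNReal.ofReal (1 / cos l) * μH[1] (circlePt '' A)) (𝓝[>] 0)
      (𝓝 (μH[1] (circlePt '' A))) := by
    have hcos : Tendsto (fun l ↦ ENNReal.ofReal (1 / cos l)) (𝓝[>] 0) (𝓝 1) := by
      have h : Tendsto (fun l ↦ 1 / cos l) (𝓝 0) (𝓝 (1 / cos 0)) :=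
        tendsto_const_nhds.div (continuous_cos.tendsto 0) (by simp)
      simpa using ENNReal.tendsto_ofReal (h.mono_left nhdsWithin_le_nhds)
    simpa using ENNReal.Tendsto.mul_const hcos (Or.inl one_ne_zero)
  exact ge_of_tendsto hlim (eventually_of_mem (Ioo_mem_nhdsGT (by positivity)) hbound)

lemma volume_queenArc_Icc_le {f : ℝ → Plane} {a b : ℝ} (hf : LipschitzOnWith 1 f (Icc a b)) :
    volume (queenArc f (Icc a b)) ≤ ENNReal.ofReal (b - a) := by
  have hArc : queenArc f (Icc a b) = Ico 0 (2 * π) ∩ circlePt ⁻¹' (f '' Icc a b) := rfl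
  have hmeas : MeasurableSet (queenArc f (Icc a b)) := by
    rw [hArc]
    exact measurableSet_Ico.inter ((isCompact_Icc.image_of_continuousOn hf.continuousOn).isClosed
      |>.preimage continuous_circlePt).measurableSet
  have himage : circlePt '' queenArc f (Icc a b) ⊆ f '' Icc a b := by
    rw [hArc]
    exact (image_mono inter_subset_right).trans (image_preimage_subset _ _)
  calc volume (queenArc f (Icc a b))
      ≤ μH[1] (circlePt '' queenArc f (Icc a b)) := volume_le_hausdorffMeasure_image_circlePt hmeas
        ((circlePt_injOn_Ico (by simp)).mono fun θ hθ ↦ hθ.1)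
    _ ≤ μH[1] (f '' Icc a b) := measure_mono himage
    _ ≤ (1 : ℝ≥0) ^ (1 : ℝ) * μH[1] (Icc a b) := hf.hausdorffMeasure_image_le zero_le_one
    _ = ENNReal.ofReal (b - a) := by simp [hausdorffMeasure_real]

lemma IsTraj.norm_le {f : ℝ → Plane} (hf : IsTraj f) {t : ℝ} (ht : 0 ≤ t) : ‖f t‖ ≤ t := by
  simpa [hf.2, abs_of_nonneg ht] using hf.1.dist_le_mul t ht 0 (mem_Ici.2 le_rfl)

section Evacuation

variable {n : ℕ} {Q : ℝ → Plane} {S : Fin n → ℝ → Plane} {B : ℝ}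

lemma isClosed_setOf_visited (hQ : IsTraj Q) (hS : ∀ i, IsTraj (S i)) (p : Plane) :
    IsClosed {t : ℝ | 0 ≤ t ∧ (Q t = p ∨ ∃ i, S i t = p)} := by
  have hclosed : ∀ f : ℝ → Plane, IsTraj f → IsClosed (Ici 0 ∩ f ⁻¹' {p}) := fun f hf ↦
    hf.1.continuousOn.preimage_isClosed_of_isClosed isClosed_Ici isClosed_singleton
  convert (hclosed Q hQ).union (isClosed_iUnion_of_finite fun i ↦ hclosed (S i) (hS i)) using 1
  ext t
  simp only [mem_ofPred_eq, mem_union, mem_inter_iff, mem_iUnion, mem_preimage, mem_singleton_iff,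
    mem_Ici]
  tauto

lemma visitTime_mem (hQ : IsTraj Q) (hS : ∀ i, IsTraj (S i)) {p : Plane}
    (hp : ∃ t, 0 ≤ t ∧ (Q t = p ∨ ∃ i, S i t = p)) :
    0 ≤ visitTime Q S p ∧ (Q (visitTime Q S p) = p ∨ ∃ i, S i (visitTime Q S p) = p) :=
  (isClosed_setOf_visited hQ hS p).csInf_mem hp ⟨0, fun _ ht ↦ ht.1⟩

lemma Evacuates.one_le (hQ : IsTraj Q) (hS : ∀ i, IsTraj (S i)) (hEv : Evacuates Q S B) :
    1 ≤ B := by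
  obtain ⟨hvisited, hB⟩ := hEv (circlePt 0) (norm_circlePt 0)
  have ht := (visitTime_mem hQ hS hvisited).1
  have := norm_sub_norm_le (circlePt 0) (Q (visitTime Q S (circlePt 0)))
  rw [norm_circlePt, norm_sub_rev] at this
  linarith [hQ.norm_le ht]

lemma Evacuates.Ico_subset_union_queenArc (hQ : IsTraj Q) (hS : ∀ i, IsTraj (S i))
    (hEv : Evacuates Q S B) :
    Ico 0 (2 * π) ⊆ queenArc Q (Ici 0) ∪ ⋃ i, queenArc (S i) (Icc 1 B) := by
  intro θ hθ
  obtain ⟨hvisited, hB⟩ := hEv (circlePt θ) (norm_circlePt θ)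
  obtain ⟨ht, hQt | ⟨i, hSt⟩⟩ := visitTime_mem hQ hS hvisited
  · exact Or.inl ⟨hθ, _, ht, hQt⟩
  · have h1 : 1 ≤ visitTime Q S (circlePt θ) := by
      simpa [hSt, norm_circlePt] using (hS i).norm_le ht
    refine Or.inr (mem_iUnion.2 ⟨i, hθ, _, ⟨h1, ?_⟩, hSt⟩)
    linarith [norm_nonneg (Q (visitTime Q S (circlePt θ)) - circlePt θ)]

theorem Evacuates.ofReal_le_volume_queenArc (hQ : IsTraj Q) (hS : ∀ i, IsTraj (S i))
    (hEv : Evacuates Q S B) :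
    ENNReal.ofReal (2 * π - n * (B - 1)) ≤ volume (queenArc Q (Ici 0)) := by
  have hB := hEv.one_le hQ hS
  have hcover : ENNReal.ofReal (2 * π) ≤
      volume (queenArc Q (Ici 0)) + ENNReal.ofReal (n * (B - 1)) :=
    calc ENNReal.ofReal (2 * π) = volume (Ico 0 (2 * π)) := by simp
      _ ≤ volume (queenArc Q (Ici 0)) + ∑ i, volume (queenArc (S i) (Icc 1 B)) :=
        (measure_mono (hEv.Ico_subset_union_queenArc hQ hS)).trans
          ((measure_union_le _ _).trans (by gcongr; exact measure_iUnion_fintype_le _ _))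
      _ ≤ volume (queenArc Q (Ici 0)) + ∑ _i : Fin n, ENNReal.ofReal (B - 1) := by
        gcongr with i
        exact volume_queenArc_Icc_le ((hS i).1.mono fun t ht ↦ zero_le_one.trans ht.1)
      _ = volume (queenArc Q (Ici 0)) + ENNReal.ofReal (n * (B - 1)) := by
        rw [Finset.sum_const, Finset.card_univ, Fintype.card_fin, nsmul_eq_mul,
          ENNReal.ofReal_mul (Nat.cast_nonneg n), ENNReal.ofReal_natCast]
  rw [ENNReal.ofReal_sub _ (by positivity)]
  exact tsub_le_iff_right.2 hcover

end Evacuation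

theorem queen_must_explore_two_servants_general
    (Q : ℝ → Plane) (S : Fin 2 → ℝ → Plane)
    (hQ : IsTraj Q) (hS : ∀ i, IsTraj (S i))
    (B : ℝ) (hEv : Evacuates Q S B) :
    ENNReal.ofReal (2 * (1 + π - B)) ≤ volume (queenArc Q (Set.Ici 0)) := by
  convert hEv.ofReal_le_volume_queenArc hQ hS using 2
  push_cast
  ring

/-- with two servants any evacuation in time `B < 1 + π` forces the queen
to explore a subset of the perimeter of arc measure at least `2 (1 + π - B)`. -/
theorem queen_must_explore_two_servants
    (Q : ℝ → Plane) (S : Fin 2 → ℝ → Plane)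
    (hQ : IsTraj Q) (hS : ∀ i, IsTraj (S i))
    (B : ℝ) (hB : B < 1 + π) (hEv : Evacuates Q S B) :
    ENNReal.ofReal (2 * (1 + π - B)) ≤ volume (queenArc Q (Set.Ici 0)) :=
  queen_must_explore_two_servants_general Q S hQ hS B hEv
end
end
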